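/- arXiv:1007.0430 — 6 statements merged into one kernel-verified Lean document; each statement's English description precedes it below -/
import Mathlib

section
/- Let V = {V_i} be a reconstruction system with S_V = Σ V_i* V_i positive definite, lower frame bound A_V = ‖S_V⁻¹‖⁻¹ (operator norm). Fix J ⊆ {1,...,m} and suppose M_J = I − Σ_{i∈J} V_i* V_i S_V⁻¹ is invertible. Then the erased system V_J = (V_i)_{i∉J} has lower bound A_{V_J} = ‖S_{V_J}⁻¹‖⁻¹ ≥ A_V / ‖M_J⁻¹‖, and upper bound B_{V_J} = ‖S_{V_J}‖ ≤ ‖S_V‖ = B_V. -/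
open Matrix
open scoped ComplexOrder

/-- The spectral (operator) norm of a square complex matrix. -/
noncomputable def opN {d : ℕ} (A : Matrix (Fin d) (Fin d) ℂ) : ℝ :=
  ‖Matrix.toEuclideanCLM (𝕜 := ℂ) A‖

/-!
Split `S = S_J + ∑_{i ∈ J} Vᵢᴴ Vᵢ`. Then `M_J S = S_J`, so `S_J⁻¹ = S⁻¹ M_J⁻¹` and
submultiplicativity gives `‖S_J⁻¹‖ ≤ ‖S⁻¹‖ ‖M_J⁻¹‖`. For the upper bound, `0 ≤ S_J ≤ S` in the
Loewner order, and the norm is monotone on positive elements of a C⋆-algebra.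
-/

theorem inv_norm_inverse_div_le_inv_norm_inverse_mul {R : Type*} [NormedRing R] {a b : R}
    (ha : IsUnit a) (hb : IsUnit b) :
    ‖Ring.inverse a‖⁻¹ / ‖Ring.inverse b‖ ≤ ‖Ring.inverse (b * a)‖⁻¹ := by
  obtain ⟨u, rfl⟩ := ha
  obtain ⟨v, rfl⟩ := hb
  rcases subsingleton_or_nontrivial R with hR | hR
  · simp [Subsingleton.elim _ (0 : R)]
  rw [← Units.val_mul, Ring.inverse_unit, Ring.inverse_unit, Ring.inverse_unit, div_eq_mul_inv,
    ← mul_inv]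
  refine inv_anti₀ (Units.norm_pos _) ?_
  rw [_root_.mul_inv_rev, Units.val_mul]
  exact norm_mul_le _ _

namespace opN

open scoped Matrix.Norms.L2Operator MatrixOrder

variable {d : ℕ}

theorem eq_norm (A : Matrix (Fin d) (Fin d) ℂ) : opN A = ‖A‖ := rfl

theorem inv_inv_div_le_inv_inv_mul {A B : Matrix (Fin d) (Fin d) ℂ} (hA : IsUnit A)
    (hB : IsUnit B) : (opN A⁻¹)⁻¹ / opN B⁻¹ ≤ (opN (B * A)⁻¹)⁻¹ := by
  simpa only [eq_norm, nonsing_inv_eq_ringInverse] using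
    inv_norm_inverse_div_le_inv_norm_inverse_mul hA hB

theorem le_of_posSemidef {A B : Matrix (Fin d) (Fin d) ℂ} (hA : A.PosSemidef)
    (hAB : (B - A).PosSemidef) : opN A ≤ opN B := by
  rw [eq_norm, eq_norm]
  exact CStarAlgebra.norm_le_norm_of_nonneg_of_le hA.nonneg hAB

end opN

theorem posSemidef_sum_conjTranspose_mul_self {n ι : Type*} [Fintype n] {k : ι → Type*}
    [∀ i, Fintype (k i)] (V : ∀ i, Matrix (k i) n ℂ) (s : Finset ι) :
    (∑ i ∈ s, (V i)ᴴ * V i).PosSemidef :=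
  posSemidef_sum s fun i _ ↦ posSemidef_conjTranspose_mul_self (V i)

/-- If `V` is a reconstruction system with lower frame bound
`A_V = ‖S_V⁻¹‖⁻¹` and `M_J = I - (∑_{i∈J} Vᵢᴴ Vᵢ) S_V⁻¹` is invertible, then the erased
system has lower bound `A_{V_J} = ‖S_{V_J}⁻¹‖⁻¹ ≥ A_V / ‖M_J⁻¹‖` and upper bound
`B_{V_J} = ‖S_{V_J}‖ ≤ ‖S_V‖ = B_V`. -/
theorem erasure_frame_bounds
    (d m : ℕ) (k : Fin m → ℕ)
    (V : ∀ i : Fin m, Matrix (Fin (k i)) (Fin d) ℂ)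
    (S : Matrix (Fin d) (Fin d) ℂ) (hS : S = ∑ i, (V i)ᴴ * V i)
    (hSpd : S.PosDef)
    (J : Finset (Fin m))
    (M : Matrix (Fin d) (Fin d) ℂ)
    (hM : M = 1 - (∑ i ∈ J, (V i)ᴴ * V i) * S⁻¹)
    (hMinv : IsUnit M)
    (SJ : Matrix (Fin d) (Fin d) ℂ)
    (hSJ : SJ = ∑ i ∈ Jᶜ, (V i)ᴴ * V i) :
    (opN S⁻¹)⁻¹ / opN M⁻¹ ≤ (opN SJ⁻¹)⁻¹ ∧ opN SJ ≤ opN S := by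
  have hSunit : IsUnit S := hSpd.isUnit
  have hsplit : S - ∑ i ∈ J, (V i)ᴴ * V i = SJ := by
    rw [hS, hSJ, ← Finset.sum_compl_add_sum J, add_sub_cancel_right]
  have hMS : M * S = SJ := by
    rw [hM, sub_mul, one_mul, mul_assoc, nonsing_inv_mul S ((isUnit_iff_isUnit_det S).mp hSunit),
      mul_one, hsplit]
  refine ⟨hMS ▸ opN.inv_inv_div_le_inv_inv_mul hSunit hMinv, opN.le_of_posSemidef ?_ ?_⟩
  · exact hSJ ▸ posSemidef_sum_conjTranspose_mul_self V Jᶜ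
  · rw [← hsplit, sub_sub_cancel]
    exact posSemidef_sum_conjTranspose_mul_self V J
end

section
/- Let V = {V_i} be a reconstruction system and J ⊆ {1,...,m} such that ‖Σ_{i∈J} V_i* V_i‖ < A_V where A_V = ‖S_V⁻¹‖⁻¹. Then M_J = I − Σ_{i∈J} V_i* V_i S_V⁻¹ is invertible, and A_V − ‖Σ_{i∈J} V_i* V_i‖ ≤ A_V / ‖M_J⁻¹‖. -/
open Matrix
open scoped ComplexOrder

/-!
Write `N = ∑_{i∈J} Vᵢᴴ Vᵢ`. Then `M_J = 1 - N S⁻¹` with `‖N S⁻¹‖ ≤ ‖N‖ ‖S⁻¹‖ < 1`, so `M_J` is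
inverted by the Neumann series `∑ (N S⁻¹)ⁿ`, whose norm is at most `(1 - ‖N‖ ‖S⁻¹‖)⁻¹`.
Multiplying the reciprocal of this bound by `A_V = ‖S⁻¹‖⁻¹` gives `A_V - ‖N‖ ≤ A_V / ‖M_J⁻¹‖`.
-/

open scoped Ring

theorem map_ringInverse_of_isUnit {M₀ N₀ F : Type*} [MonoidWithZero M₀] [MonoidWithZero N₀]
    [FunLike F M₀ N₀] [MonoidHomClass F M₀ N₀] (f : F) {x : M₀} (hx : IsUnit x) :
    f x⁻¹ʳ = (f x)⁻¹ʳ :=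
  calc f x⁻¹ʳ = (f x)⁻¹ʳ * (f x * f x⁻¹ʳ) := by
        rw [Ring.inverse_mul_cancel_left _ _ (hx.map f)]
    _ = (f x)⁻¹ʳ := by rw [← map_mul, Ring.mul_inverse_cancel x hx, map_one, mul_one]

section NormedRing

variable {R : Type*} [NormedRing R]

theorem ne_zero_of_norm_lt_inv_norm {a s : R} (h : ‖a‖ < ‖s‖⁻¹) : s ≠ 0 := by
  rintro rfl
  simp only [norm_zero, _root_.inv_zero] at h
  exact (norm_nonneg a).not_gt h

theorem norm_mul_lt_one_of_norm_lt_inv_norm {a s : R} (h : ‖a‖ < ‖s‖⁻¹) : ‖a * s‖ < 1 := by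
  have hs : 0 < ‖s‖ := norm_pos_iff.2 (ne_zero_of_norm_lt_inv_norm h)
  calc ‖a * s‖ ≤ ‖a‖ * ‖s‖ := norm_mul_le a s
    _ < ‖s‖⁻¹ * ‖s‖ := by gcongr
    _ = 1 := inv_mul_cancel₀ hs.ne'

variable [HasSummableGeomSeries R]

theorem isUnit_one_sub_mul_of_norm_lt_inv_norm {a s : R} (h : ‖a‖ < ‖s‖⁻¹) :
    IsUnit (1 - a * s) :=
  isUnit_one_sub_of_norm_lt_one (norm_mul_lt_one_of_norm_lt_inv_norm h)

variable [NormOneClass R]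

theorem norm_ringInverse_one_sub_le {t : R} (ht : ‖t‖ < 1) : ‖(1 - t)⁻¹ʳ‖ ≤ (1 - ‖t‖)⁻¹ := by
  simpa [← geom_series_eq_inverse t ht] using tsum_geometric_le_of_norm_lt_one t ht

theorem one_sub_norm_le_inv_norm_ringInverse_one_sub {t : R} (ht : ‖t‖ < 1) :
    1 - ‖t‖ ≤ ‖(1 - t)⁻¹ʳ‖⁻¹ := by
  have := NormOneClass.nontrivial (G := R)
  have hinv : 0 < ‖(1 - t)⁻¹ʳ‖ :=
    norm_pos_iff.2 (Ring.isUnit_iff_inverse_ne_zero.1 (isUnit_one_sub_of_norm_lt_one ht))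
  exact (le_inv_comm₀ (by linarith) hinv).2 (norm_ringInverse_one_sub_le ht)

theorem inv_norm_sub_norm_le_div_norm_ringInverse {a s : R} (h : ‖a‖ < ‖s‖⁻¹) :
    ‖s‖⁻¹ - ‖a‖ ≤ ‖s‖⁻¹ / ‖(1 - a * s)⁻¹ʳ‖ := by
  have hs : 0 < ‖s‖ := norm_pos_iff.2 (ne_zero_of_norm_lt_inv_norm h)
  calc ‖s‖⁻¹ - ‖a‖ = ‖s‖⁻¹ * (1 - ‖a‖ * ‖s‖) := by field_simp
    _ ≤ ‖s‖⁻¹ * (1 - ‖a * s‖) := by gcongr; exact norm_mul_le a s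
    _ ≤ ‖s‖⁻¹ * ‖(1 - a * s)⁻¹ʳ‖⁻¹ := by
        gcongr
        exact one_sub_norm_le_inv_norm_ringInverse_one_sub
          (norm_mul_lt_one_of_norm_lt_inv_norm h)
    _ = ‖s‖⁻¹ / ‖(1 - a * s)⁻¹ʳ‖ := (div_eq_mul_inv _ _).symm

end NormedRing

theorem erasure_smallness_criterion_general
    (d m : ℕ) (k : Fin m → ℕ)
    (V : ∀ i : Fin m, Matrix (Fin (k i)) (Fin d) ℂ)
    (S : Matrix (Fin d) (Fin d) ℂ)
    (J : Finset (Fin m))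
    (M : Matrix (Fin d) (Fin d) ℂ)
    (hM : M = 1 - (∑ i ∈ J, (V i)ᴴ * V i) * S⁻¹)
    (hlt : opN (∑ i ∈ J, (V i)ᴴ * V i) < (opN S⁻¹)⁻¹) :
    IsUnit M ∧ (opN S⁻¹)⁻¹ - opN (∑ i ∈ J, (V i)ᴴ * V i) ≤ (opN S⁻¹)⁻¹ / opN M⁻¹ := by
  set f := Matrix.toEuclideanCLM (𝕜 := ℂ) (n := Fin d)
  unfold opN at hlt ⊢
  -- needed for `‖1‖ = 1` in the operator algebra
  have : Nontrivial (EuclideanSpace ℂ (Fin d)) := by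
    by_contra hE
    rw [not_nontrivial_iff_subsingleton] at hE
    exact ne_zero_of_norm_lt_inv_norm hlt (Subsingleton.elim _ _)
  have hfM : f M = 1 - f (∑ i ∈ J, (V i)ᴴ * V i) * f S⁻¹ := by
    rw [hM, map_sub, map_one, map_mul]
  have hMunit : IsUnit M := by
    rw [← MulEquiv.isUnit_map f, hfM]
    exact isUnit_one_sub_mul_of_norm_lt_inv_norm hlt
  refine ⟨hMunit, ?_⟩
  rw [nonsing_inv_eq_ringInverse M, map_ringInverse_of_isUnit f hMunit, hfM]
  exact inv_norm_sub_norm_le_div_norm_ringInverse hlt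

/-- If `‖∑_{i∈J} Vᵢᴴ Vᵢ‖ < A_V = ‖S_V⁻¹‖⁻¹`, then
`M_J = I - (∑_{i∈J} Vᵢᴴ Vᵢ) S_V⁻¹` is invertible and
`A_V - ‖∑_{i∈J} Vᵢᴴ Vᵢ‖ ≤ A_V / ‖M_J⁻¹‖`. -/
theorem erasure_smallness_criterion
    (d m : ℕ) (k : Fin m → ℕ)
    (V : ∀ i : Fin m, Matrix (Fin (k i)) (Fin d) ℂ)
    (S : Matrix (Fin d) (Fin d) ℂ) (hS : S = ∑ i, (V i)ᴴ * V i)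
    (hSpd : S.PosDef)
    (J : Finset (Fin m))
    (M : Matrix (Fin d) (Fin d) ℂ)
    (hM : M = 1 - (∑ i ∈ J, (V i)ᴴ * V i) * S⁻¹)
    (hlt : opN (∑ i ∈ J, (V i)ᴴ * V i) < (opN S⁻¹)⁻¹) :
    IsUnit M ∧ (opN S⁻¹)⁻¹ - opN (∑ i ∈ J, (V i)ᴴ * V i) ≤ (opN S⁻¹)⁻¹ / opN M⁻¹ :=
  erasure_smallness_criterion_general d m k V S J M hM hlt
end

section
/- Let V be a reconstruction system and W a dual system of V. Then T_W* = T_{V^#}* + A for a unique A : ⊕ℂ^{k_i} → ℂ^d with A T_V = 0, and tr(S_W) = tr(S_{V^#}) + ‖A‖_F², where ‖·‖_F is the Frobenius norm. -/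
open Matrix
open scoped ComplexOrder

/-!
Writing `Wᵢᴴ = S⁻¹ Vᵢᴴ + Bᵢ`, the condition `∑ Bᵢ Vᵢ = 0` is exactly duality, because
`∑ S⁻¹ Vᵢᴴ Vᵢ = S⁻¹ S = 1`; this gives existence and uniqueness of `B`. Expanding
`∑ Wᵢᴴ Wᵢ`, the cross terms are `S⁻¹ (∑ Bᵢ Vᵢ)ᴴ` and `(∑ Bᵢ Vᵢ) S⁻¹`, so they vanish and
`S_W = S_{V^#} + ∑ Bᵢ Bᵢᴴ`, whose trace is `‖A‖_F²`.
-/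

theorem trace_mul_conjTranspose_self_eq_sum_norm_sq {𝕜 m n : Type*} [RCLike 𝕜]
    [Fintype m] [Fintype n] (A : Matrix m n 𝕜) :
    (A * Aᴴ).trace = ((∑ a, ∑ b, ‖A a b‖ ^ 2 : ℝ) : 𝕜) := by
  push_cast
  simp only [trace, diag_apply, mul_apply, conjTranspose_apply, RCLike.star_def,
    RCLike.mul_conj]

theorem sum_conjTranspose_mul_self_add_of_sum_mul_eq_zero {R ι n : Type*} {κ : ι → Type*}
    [Ring R] [StarRing R] [Fintype ι] [Fintype n] [∀ i, Fintype (κ i)]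
    (V : ∀ i, Matrix (κ i) n R) (P : Matrix n n R) (B : ∀ i, Matrix n (κ i) R)
    (hBV : ∑ i, B i * V i = 0) :
    ∑ i, (V i * P + (B i)ᴴ)ᴴ * (V i * P + (B i)ᴴ)
      = ∑ i, (V i * P)ᴴ * (V i * P) + ∑ i, B i * (B i)ᴴ := by
  have hcross : ∑ i, ((V i * P)ᴴ * (B i)ᴴ + B i * (V i * P)) = 0 :=
    calc _ = (∑ i, B i * V i * P)ᴴ + ∑ i, B i * V i * P := by
          simp only [conjTranspose_sum, Finset.sum_add_distrib, conjTranspose_mul,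
            Matrix.mul_assoc]
      _ = 0 := by rw [← Finset.sum_mul, hBV, Matrix.zero_mul, conjTranspose_zero, add_zero]
  rw [← Finset.sum_add_distrib, ← sub_eq_zero, ← Finset.sum_sub_distrib, ← hcross]
  refine Finset.sum_congr rfl fun i _ => ?_
  simp only [conjTranspose_add, conjTranspose_conjTranspose, Matrix.add_mul, Matrix.mul_add]
  abel

/-- If `W` is a dual system of the reconstruction system `V`, then the
synthesis operator of `W` decomposes uniquely as `T_W* = T_{V^#}* + A` with `A T_V = 0`
(componentwise: `Wᵢᴴ = S_V⁻¹ Vᵢᴴ + Bᵢ` with `∑ Bᵢ Vᵢ = 0`), and then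
`tr S_W = tr S_{V^#} + ‖A‖_F²`. -/
theorem dual_decomposition_trace
    (d m : ℕ) (k : Fin m → ℕ)
    (V W : ∀ i : Fin m, Matrix (Fin (k i)) (Fin d) ℂ)
    (S : Matrix (Fin d) (Fin d) ℂ) (hS : S = ∑ i, (V i)ᴴ * V i)
    (hSpd : S.PosDef)
    (hdual : ∑ i, (W i)ᴴ * V i = 1) :
    (∃! B : ∀ i : Fin m, Matrix (Fin d) (Fin (k i)) ℂ,
        (∀ i, (W i)ᴴ = S⁻¹ * (V i)ᴴ + B i) ∧ ∑ i, B i * V i = 0)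
    ∧ (∀ B : ∀ i : Fin m, Matrix (Fin d) (Fin (k i)) ℂ,
        ((∀ i, (W i)ᴴ = S⁻¹ * (V i)ᴴ + B i) ∧ ∑ i, B i * V i = 0) →
        Matrix.trace (∑ i, (W i)ᴴ * W i)
          = Matrix.trace (∑ i, (V i * S⁻¹)ᴴ * (V i * S⁻¹))
            + ((∑ i, ∑ a, ∑ b, ‖B i a b‖ ^ 2 : ℝ) : ℂ)) := by
  have hSinvH : (S⁻¹)ᴴ = S⁻¹ := by rw [conjTranspose_nonsing_inv, hSpd.1]
  have hcanonical_dual : ∑ i, S⁻¹ * (V i)ᴴ * V i = 1 := by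
    simp only [Matrix.mul_assoc]
    rw [← Finset.mul_sum, ← hS, nonsing_inv_mul S ((isUnit_iff_isUnit_det S).mp hSpd.isUnit)]
  refine ⟨⟨fun i => (W i)ᴴ - S⁻¹ * (V i)ᴴ, ⟨fun i => (add_sub_cancel _ _).symm, ?_⟩, ?_⟩, ?_⟩
  · simp only [Matrix.sub_mul, Finset.sum_sub_distrib, hdual, hcanonical_dual, sub_self]
  · rintro B ⟨hW, -⟩
    funext i
    rw [hW i, add_sub_cancel_left]
  · rintro B ⟨hW, hBV⟩
    have hW' : ∀ i, W i = V i * S⁻¹ + (B i)ᴴ := fun i => by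
      rw [← conjTranspose_conjTranspose (W i), hW i, conjTranspose_add, conjTranspose_mul,
        hSinvH, conjTranspose_conjTranspose]
    simp only [hW', sum_conjTranspose_mul_self_add_of_sum_mul_eq_zero V S⁻¹ B hBV, trace_add,
      add_right_inj]
    rw [trace_sum, Complex.ofReal_sum]
    exact Finset.sum_congr rfl fun i _ => trace_mul_conjTranspose_self_eq_sum_norm_sq (B i)
end

section
/- Let V be a reconstruction system on ℂ^d and W any dual system of V. Then tr(S_W²) ≥ tr(S_V⁻²) = Σ_{i=1}^d λ_i(S_V)⁻², with equality if and only if W = V^# (the canonical dual). -/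
/-!
Write a dual `W` of `V` as `W = V^# + D`. Duality forces `∑ Dᵢᴴ Vᵢ = 0`, so the cross terms
vanish and `S_W = S_V⁻¹ + S_D` with `S_D = ∑ Dᵢᴴ Dᵢ ⪰ 0`. Hence
`tr(S_W²) = tr(S_V⁻²) + 2 tr(S_V⁻¹ S_D) + tr(S_D²)`, where both extra terms are traces of products
of positive semidefinite matrices, so nonnegative, and `tr(S_D²) = 0` forces `S_D = 0`, i.e.
`D = 0`. The formula `tr(S_V⁻²) = ∑ λᵢ⁻²` is the continuous functional calculus for `x ↦ x⁻²`.
-/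

open Matrix
open scoped ComplexOrder

/-- `μ : ι → ℝ` lists the eigenvalues (with multiplicity, in some order) of the
Hermitian matrix `A`. -/
def HasSpectrum {n : ℕ} {ι : Type*} [Fintype ι]
    (A : Matrix (Fin n) (Fin n) ℂ) (μ : ι → ℝ) : Prop :=
  ∃ hA : A.IsHermitian, ∃ e : Fin n ≃ ι, ∀ i, hA.eigenvalues i = μ (e i)

namespace Matrix

variable {𝕜 n : Type*} [RCLike 𝕜]

section Trace

variable [Fintype n]

lemma trace_add_mul_add (A B : Matrix n n 𝕜) :
    ((A + B) * (A + B)).trace = (A * A).trace + (2 * (A * B).trace + (B * B).trace) := by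
  rw [add_mul, mul_add, mul_add, trace_add, trace_add, trace_add, trace_mul_comm B A]
  ring

variable [DecidableEq n]

lemma IsHermitian.trace_cfc {A : Matrix n n 𝕜} (hA : A.IsHermitian) (f : ℝ → ℝ) :
    (cfc f A).trace = ∑ i, (f (hA.eigenvalues i) : 𝕜) := by
  rw [hA.cfc_eq, IsHermitian.cfc, Unitary.conjStarAlgAut_apply, trace_mul_cycle,
    Unitary.coe_star_mul_self, one_mul, trace_diagonal]
  rfl

lemma IsHermitian.trace_inv_mul_inv {A : Matrix n n 𝕜} (hA : A.IsHermitian) (hA' : IsUnit A) :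
    (A⁻¹ * A⁻¹).trace = ∑ i, (((hA.eigenvalues i)⁻¹ ^ 2 : ℝ) : 𝕜) := by
  have hinv : cfc (fun x : ℝ ↦ x⁻¹) A = A⁻¹ := by
    rw [cfc_ringInverse_id A hA' hA.isSelfAdjoint, nonsing_inv_eq_ringInverse]
  rw [← hA.trace_cfc (fun x ↦ x⁻¹ ^ 2),
    cfc_pow (·⁻¹) 2 A (finite_real_spectrum.continuousOn _) hA.isSelfAdjoint, hinv, sq]

open scoped MatrixOrder Matrix.Norms.L2Operator in
lemma PosSemidef.trace_mul_nonneg {A B : Matrix n n 𝕜} (hA : A.PosSemidef) (hB : B.PosSemidef) :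
    0 ≤ (A * B).trace := by
  obtain ⟨X, rfl⟩ := CStarAlgebra.nonneg_iff_eq_star_mul_self.mp hA.nonneg
  rw [star_eq_conjTranspose, mul_assoc, trace_mul_comm, mul_assoc]
  simpa only [mul_assoc] using (hB.mul_mul_conjTranspose_same X).trace_nonneg

lemma PosSemidef.trace_mul_self_le_trace_add_mul_self {A B : Matrix n n 𝕜} (hA : A.PosSemidef)
    (hB : B.PosSemidef) : (A * A).trace ≤ ((A + B) * (A + B)).trace := by
  rw [trace_add_mul_add]
  exact le_add_of_nonneg_right <| add_nonneg (mul_nonneg zero_le_two (hA.trace_mul_nonneg hB))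
    (hB.trace_mul_nonneg hB)

lemma PosSemidef.trace_add_mul_self_eq_iff {A B : Matrix n n 𝕜} (hA : A.PosSemidef)
    (hB : B.PosSemidef) : ((A + B) * (A + B)).trace = (A * A).trace ↔ B = 0 := by
  refine ⟨fun h ↦ ?_, by rintro rfl; rw [add_zero]⟩
  rw [trace_add_mul_add, add_eq_left, add_eq_zero_iff_of_nonneg (mul_nonneg zero_le_two
    (hA.trace_mul_nonneg hB)) (hB.trace_mul_nonneg hB)] at h
  rw [← trace_conjTranspose_mul_self_eq_zero_iff, hB.isHermitian.eq]
  exact h.2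

end Trace

section Frames

variable {ι : Type*} [Fintype ι] {κ : ι → Type*} [∀ i, Fintype (κ i)]

/-- `S_V = mixedFrameOperator V V`, and `W` is dual to `V` iff `mixedFrameOperator W V = 1`. -/
def mixedFrameOperator (W V : ∀ i, Matrix (κ i) n 𝕜) : Matrix n n 𝕜 :=
  ∑ i, (W i)ᴴ * V i

lemma conjTranspose_mixedFrameOperator (W V : ∀ i, Matrix (κ i) n 𝕜) :
    (mixedFrameOperator W V)ᴴ = mixedFrameOperator V W := by
  simp [mixedFrameOperator, conjTranspose_sum]

lemma mixedFrameOperator_add_left (W W' V : ∀ i, Matrix (κ i) n 𝕜) :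
    mixedFrameOperator (W + W') V = mixedFrameOperator W V + mixedFrameOperator W' V := by
  simp only [mixedFrameOperator, Pi.add_apply, conjTranspose_add, Matrix.add_mul,
    Finset.sum_add_distrib]

lemma mixedFrameOperator_add_right (W V V' : ∀ i, Matrix (κ i) n 𝕜) :
    mixedFrameOperator W (V + V') = mixedFrameOperator W V + mixedFrameOperator W V' := by
  simp only [mixedFrameOperator, Pi.add_apply, Matrix.mul_add, Finset.sum_add_distrib]

lemma mixedFrameOperator_sub_left (W W' V : ∀ i, Matrix (κ i) n 𝕜) :
    mixedFrameOperator (W - W') V = mixedFrameOperator W V - mixedFrameOperator W' V := by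
  simp only [mixedFrameOperator, Pi.sub_apply, conjTranspose_sub, Matrix.sub_mul,
    Finset.sum_sub_distrib]

variable [Fintype n]

lemma posSemidef_mixedFrameOperator_self (V : ∀ i, Matrix (κ i) n 𝕜) :
    (mixedFrameOperator V V).PosSemidef :=
  posSemidef_sum _ fun i _ ↦ posSemidef_conjTranspose_mul_self (V i)

lemma mixedFrameOperator_mul_right (W V : ∀ i, Matrix (κ i) n 𝕜) (A : Matrix n n 𝕜) :
    mixedFrameOperator W (fun i ↦ V i * A) = mixedFrameOperator W V * A := by
  simp only [mixedFrameOperator, Finset.sum_mul, Matrix.mul_assoc]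

lemma mixedFrameOperator_mul_left (W V : ∀ i, Matrix (κ i) n 𝕜) (A : Matrix n n 𝕜) :
    mixedFrameOperator (fun i ↦ W i * A) V = Aᴴ * mixedFrameOperator W V := by
  simp only [mixedFrameOperator, conjTranspose_mul, Finset.mul_sum, Matrix.mul_assoc]

open scoped MatrixOrder in
lemma mixedFrameOperator_self_eq_zero_iff {V : ∀ i, Matrix (κ i) n 𝕜} :
    mixedFrameOperator V V = 0 ↔ V = 0 := by
  rw [mixedFrameOperator, Finset.sum_eq_zero_iff_of_nonneg fun i _ ↦
    (posSemidef_conjTranspose_mul_self (V i)).nonneg, funext_iff]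
  simp [conjTranspose_mul_self_eq_zero]

variable [DecidableEq n]

noncomputable def canonicalDual (V : ∀ i, Matrix (κ i) n 𝕜) : ∀ i, Matrix (κ i) n 𝕜 :=
  fun i ↦ V i * (mixedFrameOperator V V)⁻¹

lemma mixedFrameOperator_canonicalDual_right (W V : ∀ i, Matrix (κ i) n 𝕜) :
    mixedFrameOperator W (canonicalDual V) =
      mixedFrameOperator W V * (mixedFrameOperator V V)⁻¹ :=
  mixedFrameOperator_mul_right W V _

variable {V W : ∀ i, Matrix (κ i) n 𝕜}

lemma mixedFrameOperator_canonicalDual_left (hV : IsUnit (mixedFrameOperator V V)) :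
    mixedFrameOperator (canonicalDual V) V = 1 := by
  unfold canonicalDual
  rw [mixedFrameOperator_mul_left, conjTranspose_nonsing_inv,
    (posSemidef_mixedFrameOperator_self V).isHermitian.eq,
    nonsing_inv_mul _ ((isUnit_iff_isUnit_det _).mp hV)]

lemma mixedFrameOperator_self_eq_inv_add (hV : IsUnit (mixedFrameOperator V V))
    (hW : mixedFrameOperator W V = 1) :
    mixedFrameOperator W W = (mixedFrameOperator V V)⁻¹ +
      mixedFrameOperator (W - canonicalDual V) (W - canonicalDual V) := by
  set D := W - canonicalDual V
  have hDV : mixedFrameOperator D V = 0 := by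
    rw [mixedFrameOperator_sub_left, hW, mixedFrameOperator_canonicalDual_left hV, sub_self]
  have hDX : mixedFrameOperator D (canonicalDual V) = 0 := by
    rw [mixedFrameOperator_canonicalDual_right, hDV, zero_mul]
  have hXD : mixedFrameOperator (canonicalDual V) D = 0 := by
    rw [← conjTranspose_mixedFrameOperator, hDX, conjTranspose_zero]
  have hXX : mixedFrameOperator (canonicalDual V) (canonicalDual V) =
      (mixedFrameOperator V V)⁻¹ := by
    rw [mixedFrameOperator_canonicalDual_right, mixedFrameOperator_canonicalDual_left hV, one_mul]
  rw [← add_sub_cancel (canonicalDual V) W, mixedFrameOperator_add_left,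
    mixedFrameOperator_add_right, mixedFrameOperator_add_right, hXX, hXD, hDX]
  abel

end Frames

end Matrix

lemma HasSpectrum.re_trace_inv_mul_inv {d : ℕ} {ι : Type*} [Fintype ι]
    {S : Matrix (Fin d) (Fin d) ℂ} {μ : ι → ℝ} (h : HasSpectrum S μ) (hS : IsUnit S) :
    (S⁻¹ * S⁻¹).trace.re = ∑ i, (μ i)⁻¹ ^ 2 := by
  obtain ⟨hA, e, he⟩ := h
  rw [hA.trace_inv_mul_inv hS, Complex.re_sum, ← e.sum_comp]
  exact Finset.sum_congr rfl fun i _ ↦ by rw [he]; exact Complex.ofReal_re _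

/-- For every dual system `W` of a reconstruction system `V`,
`tr(S_W²) ≥ tr(S_V⁻²) = ∑ᵢ λᵢ(S_V)⁻²`, with equality iff `W = V^#` is the canonical
dual. -/
theorem canonical_dual_minimizes_potential
    (d m : ℕ) (k : Fin m → ℕ)
    (V W : ∀ i : Fin m, Matrix (Fin (k i)) (Fin d) ℂ)
    (S : Matrix (Fin d) (Fin d) ℂ) (hS : S = ∑ i, (V i)ᴴ * V i)
    (hSpd : S.PosDef)
    (hdual : ∑ i, (W i)ᴴ * V i = 1)
    (SW : Matrix (Fin d) (Fin d) ℂ) (hSW : SW = ∑ i, (W i)ᴴ * W i) :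
    (Matrix.trace (S⁻¹ * S⁻¹)).re ≤ (Matrix.trace (SW * SW)).re
    ∧ (∀ lam : Fin d → ℝ, HasSpectrum S lam →
        (Matrix.trace (S⁻¹ * S⁻¹)).re = ∑ i, (lam i) ⁻¹ ^ 2)
    ∧ ((Matrix.trace (SW * SW)).re = (Matrix.trace (S⁻¹ * S⁻¹)).re
        ↔ ∀ i, W i = V i * S⁻¹) := by
  change S = mixedFrameOperator V V at hS
  change mixedFrameOperator W V = 1 at hdual
  change SW = mixedFrameOperator W W at hSW
  subst hS hSW
  have hdecomp := mixedFrameOperator_self_eq_inv_add hSpd.isUnit hdual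
  set D := W - canonicalDual V
  have hD := posSemidef_mixedFrameOperator_self D
  have hle := hSpd.posSemidef.inv.trace_mul_self_le_trace_add_mul_self hD
  rw [← hdecomp] at hle
  refine ⟨(Complex.le_def.mp hle).1, fun μ h ↦ h.re_trace_inv_mul_inv hSpd.isUnit, ?_⟩
  -- `≤` on `ℂ` includes equality of imaginary parts, so equal real parts give equal traces.
  calc _ ↔ ((mixedFrameOperator W W) * (mixedFrameOperator W W)).trace =
        ((mixedFrameOperator V V)⁻¹ * (mixedFrameOperator V V)⁻¹).trace :=
        ⟨fun h ↦ Complex.ext h (Complex.le_def.mp hle).2.symm, fun h ↦ h ▸ rfl⟩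
    _ ↔ D = 0 := by
        rw [hdecomp, hSpd.posSemidef.inv.trace_add_mul_self_eq_iff hD,
          mixedFrameOperator_self_eq_zero_iff]
    _ ↔ _ := by simp only [D, sub_eq_zero, funext_iff, canonicalDual]
end

section
/- Let V be a reconstruction system on ℂ^d with n = Σ k_i ≥ 2d. Then a strictly positive decreasing vector μ ∈ ℝ^d is the spectrum of S_W for some dual system W of V if and only if μ_j ≥ λ_{d−j+1}(S_V)⁻¹ for every j ∈ {1,...,d}, where λ_1(S_V) ≥ ... ≥ λ_d(S_V) are the eigenvalues of S_V. -/
/-!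
Stacking the blocks of `V` and of a dual system `W` turns them into `n × d` matrices `V` and `Z`
with `S_V = VᴴV`, duality `ZᴴV = 1` and `S_W = ZᴴZ`. Then
`ZᴴZ - S_V⁻¹ = (Z - V S_V⁻¹)ᴴ (Z - V S_V⁻¹) ≥ 0`. Conversely, when `n ≥ 2d` the kernel of `Vᴴ`
has dimension at least `d`, so it carries an isometry `Q : ℂᵈ → ℂⁿ` with `QᴴV = 0`, and every
`M = S_V⁻¹ + CᴴC ≥ S_V⁻¹` equals `ZᴴZ` for the dual `Z = V S_V⁻¹ + QC`. So the frame operators of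
the duals are exactly the matrices `M ≥ S_V⁻¹`. By Weyl's monotonicity principle the decreasingly
ordered spectrum of such an `M` dominates that of `S_V⁻¹`, namely `(λ_{d-j+1}⁻¹)_j`; conversely any
dominating spectrum is attained by an `M` that is diagonal in an eigenbasis of `S_V`.
-/

open Matrix
open scoped ComplexOrder

open Finset
open scoped InnerProductSpace MatrixOrder

theorem Matrix.conjTranspose_of_uncurry_mul_of_uncurry {ι m α : Type*} [Fintype ι]
    {κ : ι → Type*} [∀ i, Fintype (κ i)] [NonUnitalNonAssocSemiring α] [Star α]
    (X Y : ∀ i, Matrix (κ i) m α) :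
    (of (Sigma.uncurry X))ᴴ * of (Sigma.uncurry Y) = ∑ i, (X i)ᴴ * Y i := by
  ext a b
  simp only [sum_apply, mul_apply, conjTranspose_apply, of_apply, Sigma.uncurry]
  rw [← univ_sigma_univ, sum_sigma]

section Duals

variable {𝕜 ι n : Type*} [RCLike 𝕜] [Fintype ι] [DecidableEq n]

theorem Orthonormal.conjTranspose_mul_self_eq_one {q : n → EuclideanSpace 𝕜 ι}
    (hq : Orthonormal 𝕜 q) : (of fun x j => q j x)ᴴ * of (fun x j => q j x) = 1 := by
  ext i j
  rw [one_apply, ← orthonormal_iff_ite.mp hq i j, EuclideanSpace.inner_eq_star_dotProduct]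
  simp [mul_apply, dotProduct, mul_comm]

variable [Fintype n]

theorem exists_isometry_conjTranspose_mul_eq_zero (V : Matrix ι n 𝕜)
    (hcard : 2 * Fintype.card n ≤ Fintype.card ι) :
    ∃ Q : Matrix ι n 𝕜, Qᴴ * Q = 1 ∧ Qᴴ * V = 0 := by
  classical
  have hK : Fintype.card n ≤ Module.finrank 𝕜 (LinearMap.ker (toEuclideanLin Vᴴ)) := by
    have := LinearMap.finrank_range_add_finrank_ker (toEuclideanLin Vᴴ)
    have := Submodule.finrank_le (LinearMap.range (toEuclideanLin Vᴴ))
    simp only [finrank_euclideanSpace] at *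
    omega
  set K := LinearMap.ker (toEuclideanLin Vᴴ)
  obtain ⟨e⟩ := Function.Embedding.nonempty_of_card_le (α := n) (β := Fin (Module.finrank 𝕜 K))
    (by simpa using hK)
  set q : n → EuclideanSpace 𝕜 ι := fun j => (stdOrthonormalBasis 𝕜 K (e j) : _)
  have hq : Orthonormal 𝕜 q :=
    ((stdOrthonormalBasis 𝕜 K).orthonormal.comp e e.injective).comp_linearIsometry K.subtypeₗᵢ
  refine ⟨of fun x j => q j x, hq.conjTranspose_mul_self_eq_one, ?_⟩
  rw [← conjTranspose_inj, conjTranspose_mul, conjTranspose_conjTranspose, conjTranspose_zero]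
  ext i j
  have hker := congrArg (fun v => v i) (LinearMap.mem_ker.mp (stdOrthonormalBasis 𝕜 K (e j)).2)
  simp only [toLpLin_apply, WithLp.ofLp_zero] at hker
  simpa [mul_apply, mulVec, dotProduct, q] using hker

theorem inv_le_conjTranspose_mul_self_of_conjTranspose_mul_eq_one {V Z : Matrix ι n 𝕜}
    (hV : IsUnit (Vᴴ * V).det) (hZ : Zᴴ * V = 1) : (Vᴴ * V)⁻¹ ≤ Zᴴ * Z := by
  have hZ' : Vᴴ * Z = 1 := by simpa using congrArg conjTranspose hZ
  have hinvH : (Vᴴ * V)⁻¹ᴴ = (Vᴴ * V)⁻¹ := (isHermitian_conjTranspose_mul_self V).inv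
  have hsq : Zᴴ * Z - (Vᴴ * V)⁻¹ = (Z - V * (Vᴴ * V)⁻¹)ᴴ * (Z - V * (Vᴴ * V)⁻¹) := by
    simp only [conjTranspose_sub, conjTranspose_mul, hinvH, Matrix.sub_mul, Matrix.mul_sub,
      ← Matrix.mul_assoc, hZ, Matrix.one_mul]
    simp only [Matrix.mul_assoc, hZ', Matrix.mul_one, mul_nonsing_inv _ hV]
    abel
  rw [le_iff, hsq]
  exact posSemidef_conjTranspose_mul_self _

theorem exists_conjTranspose_mul_eq_one_and_conjTranspose_mul_self_eq {V : Matrix ι n 𝕜}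
    {M : Matrix n n 𝕜} (hcard : 2 * Fintype.card n ≤ Fintype.card ι) (hV : IsUnit (Vᴴ * V).det)
    (hM : (Vᴴ * V)⁻¹ ≤ M) : ∃ Z : Matrix ι n 𝕜, Zᴴ * V = 1 ∧ Zᴴ * Z = M := by
  obtain ⟨Q, hQQ, hQV⟩ := exists_isometry_conjTranspose_mul_eq_zero V hcard
  obtain ⟨C, hC⟩ := CStarAlgebra.nonneg_iff_eq_star_mul_self.mp (sub_nonneg.mpr hM)
  have hVQ : Vᴴ * Q = 0 := by simpa using congrArg conjTranspose hQV
  have hinvH : (Vᴴ * V)⁻¹ᴴ = (Vᴴ * V)⁻¹ := (isHermitian_conjTranspose_mul_self V).inv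
  refine ⟨V * (Vᴴ * V)⁻¹ + Q * C, ?_, ?_⟩
  · simp only [conjTranspose_add, conjTranspose_mul, hinvH, Matrix.add_mul, Matrix.mul_assoc, hQV,
      Matrix.mul_zero, add_zero, nonsing_inv_mul _ hV]
  · simp only [conjTranspose_add, conjTranspose_mul, hinvH, Matrix.add_mul, Matrix.mul_add,
      Matrix.mul_assoc]
    simp only [← Matrix.mul_assoc Vᴴ, ← Matrix.mul_assoc Qᴴ, hQV, hVQ, hQQ, mul_nonsing_inv _ hV,
      Matrix.zero_mul, Matrix.mul_zero, Matrix.one_mul, Matrix.mul_one, add_zero, zero_add]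
    rw [← star_eq_conjTranspose, ← hC, add_sub_cancel]

end Duals

section DimensionCount

variable {ι κ K V : Type*} [Field K] [AddCommGroup V] [Module K V]

theorem Module.Basis.finrank_span_image_finset (b : Basis ι K V) (s : Finset ι) :
    Module.finrank K (Submodule.span K (b '' s)) = #s := by
  rw [Set.image_eq_range, ← Fintype.card_coe s]
  exact finrank_span_eq_card (b.linearIndependent.comp _ Subtype.val_injective)

theorem Module.Basis.exists_ne_zero_support_subset [Fintype ι] [Fintype κ] (b : Basis ι K V)
    (b' : Basis κ K V) (s : Finset ι) (t : Finset κ) (h : Module.finrank K V < #s + #t) :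
    ∃ v ≠ 0, ↑(b.repr v).support ⊆ (s : Set ι) ∧ ↑(b'.repr v).support ⊆ (t : Set κ) := by
  have : FiniteDimensional K V := Module.Finite.of_basis b
  set P := Submodule.span K (b '' s)
  set Q := Submodule.span K (b' '' t)
  have hinf : P ⊓ Q ≠ ⊥ := by
    intro hbot
    have := Submodule.finrank_sup_add_finrank_inf_eq P Q
    rw [hbot, finrank_bot, b.finrank_span_image_finset, b'.finrank_span_image_finset] at this
    have := Submodule.finrank_le (P ⊔ Q)
    omega
  obtain ⟨v, hv, hv0⟩ := Submodule.exists_mem_ne_zero_of_ne_bot hinf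
  exact ⟨v, hv0, b.mem_span_image.mp hv.1, b'.mem_span_image.mp hv.2⟩

end DimensionCount

section Rayleigh

open RCLike

variable {𝕜 E ι : Type*} [RCLike 𝕜] [NormedAddCommGroup E] [InnerProductSpace 𝕜 E] [Fintype ι]
  (b : OrthonormalBasis ι 𝕜 E) {T : E →ₗ[𝕜] E} {β : ι → ℝ}

theorem OrthonormalBasis.re_inner_map_self_eq_sum (hT : ∀ i, T (b i) = (β i : 𝕜) • b i)
    (v : E) : re ⟪T v, v⟫_𝕜 = ∑ i, β i * ‖b.repr v i‖ ^ 2 := by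
  have hTv : T v = ∑ i, ((β i : 𝕜) * b.repr v i) • b i := by
    conv_lhs => rw [← b.sum_repr v]
    simp only [map_sum, map_smul, hT, smul_smul, mul_comm]
  have hinner := b.orthonormal.inner_sum (fun i => (β i : 𝕜) * b.repr v i) (b.repr v) univ
  rw [← hTv, b.sum_repr] at hinner
  simp only [hinner, map_sum, map_mul, conj_ofReal, mul_assoc, RCLike.conj_mul, ← ofReal_pow,
    re_ofReal_mul, ofReal_re]

theorem OrthonormalBasis.sum_sq_norm_repr (v : E) : ∑ i, ‖b.repr v i‖ ^ 2 = ‖v‖ ^ 2 := by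
  rw [← b.repr.norm_map, EuclideanSpace.norm_sq_eq]

theorem OrthonormalBasis.mul_norm_sq_le_re_inner_map_self (hT : ∀ i, T (b i) = (β i : 𝕜) • b i)
    {v : E} {c : ℝ} (hv : ∀ i, b.repr v i ≠ 0 → c ≤ β i) : c * ‖v‖ ^ 2 ≤ re ⟪T v, v⟫_𝕜 := by
  rw [b.re_inner_map_self_eq_sum hT, ← b.sum_sq_norm_repr, mul_sum]
  refine sum_le_sum fun i _ => ?_
  by_cases hi : b.repr v i = 0
  · simp [hi]
  · exact mul_le_mul_of_nonneg_right (hv i hi) (sq_nonneg _)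

theorem OrthonormalBasis.re_inner_map_self_le_mul_norm_sq (hT : ∀ i, T (b i) = (β i : 𝕜) • b i)
    {v : E} {c : ℝ} (hv : ∀ i, b.repr v i ≠ 0 → β i ≤ c) : re ⟪T v, v⟫_𝕜 ≤ c * ‖v‖ ^ 2 := by
  rw [b.re_inner_map_self_eq_sum hT, ← b.sum_sq_norm_repr, mul_sum]
  refine sum_le_sum fun i _ => ?_
  by_cases hi : b.repr v i = 0
  · simp [hi]
  · exact mul_le_mul_of_nonneg_right (hv i hi) (sq_nonneg _)

theorem OrthonormalBasis.eigenvalues_le_of_re_inner_le {n : ℕ}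
    (b b' : OrthonormalBasis (Fin n) 𝕜 E) {T T' : E →ₗ[𝕜] E} {β α : Fin n → ℝ}
    (hβ : Antitone β) (hα : Antitone α) (hT : ∀ i, T (b i) = (β i : 𝕜) • b i)
    (hT' : ∀ i, T' (b' i) = (α i : 𝕜) • b' i) (hle : ∀ v, re ⟪T v, v⟫_𝕜 ≤ re ⟪T' v, v⟫_𝕜)
    (j : Fin n) : β j ≤ α j := by
  have hcard : Module.finrank 𝕜 E < #(Iic j) + #(Ici j) := by
    rw [Module.finrank_eq_card_basis b.toBasis, Fintype.card_fin, Fin.card_Iic, Fin.card_Ici]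
    omega
  obtain ⟨v, hv0, hvb, hvb'⟩ := b.toBasis.exists_ne_zero_support_subset b'.toBasis _ _ hcard
  have hlow : β j * ‖v‖ ^ 2 ≤ re ⟪T v, v⟫_𝕜 := b.mul_norm_sq_le_re_inner_map_self hT fun i hi =>
    hβ (by simpa using hvb (by simpa using hi))
  have hup : re ⟪T' v, v⟫_𝕜 ≤ α j * ‖v‖ ^ 2 := b'.re_inner_map_self_le_mul_norm_sq hT' fun i hi =>
    hα (by simpa using hvb' (by simpa using hi))
  exact le_of_mul_le_mul_right ((hlow.trans (hle v)).trans hup) (by positivity)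

end Rayleigh

theorem Fintype.exists_equiv_of_map_univ_eq {ι κ α : Type*} [Fintype ι] [Fintype κ]
    [DecidableEq α] {f : ι → α} {g : κ → α} (h : univ.val.map f = univ.val.map g) :
    ∃ e : ι ≃ κ, ∀ i, g (e i) = f i := by
  have hfiber (a : α) : Fintype.card {i // f i = a} = Fintype.card {k // g k = a} := by
    have hcount := congrArg (Multiset.count a) h
    rw [Multiset.count_map, Multiset.count_map] at hcount
    simpa only [Fintype.card_subtype, Finset.card, Finset.filter_val, eq_comm] using hcount
  refine ⟨(Equiv.sigmaFiberEquiv f).symm.trans ((Equiv.sigmaCongrRight fun a =>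
    Fintype.equivOfCardEq (hfiber a)).trans (Equiv.sigmaFiberEquiv g)), fun i => ?_⟩
  exact (Fintype.equivOfCardEq (hfiber (f i)) ⟨i, rfl⟩).2

section Spectrum

open Unitary

variable {n : ℕ} {ι κ : Type*} [Fintype ι] [Fintype κ] {A : Matrix (Fin n) (Fin n) ℂ}

theorem hasSpectrum_comp_equiv_iff {μ : ι → ℝ} (e : κ ≃ ι) :
    HasSpectrum A (μ ∘ e) ↔ HasSpectrum A μ :=
  ⟨fun ⟨hA, e', h⟩ => ⟨hA, e'.trans e, h⟩,
    fun ⟨hA, e', h⟩ => ⟨hA, e'.trans e.symm, by simpa using h⟩⟩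

theorem HasSpectrum.pos_of_posDef {μ : ι → ℝ} (h : HasSpectrum A μ) (hA : A.PosDef) (i : ι) :
    0 < μ i := by
  obtain ⟨_, e, he⟩ := h
  rw [← e.apply_symm_apply i, ← he]
  exact hA.eigenvalues_pos _

open Polynomial in
theorem Matrix.IsHermitian.hasSpectrum_of_charpoly_eq (hA : A.IsHermitian) {μ : ι → ℝ}
    (h : A.charpoly = ∏ i, (X - C (μ i : ℂ))) : HasSpectrum A μ := by
  have hroots : univ.val.map hA.eigenvalues = univ.val.map μ := by
    have hroots := hA.roots_charpoly_eq_eigenvalues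
    rw [h, roots_prod _ _ (prod_ne_zero_iff.mpr fun i _ => X_sub_C_ne_zero _)] at hroots
    refine Multiset.map_injective Complex.ofReal_injective ?_
    simpa [Multiset.map_map, Function.comp_def] using hroots.symm
  obtain ⟨e, he⟩ := Fintype.exists_equiv_of_map_univ_eq hroots
  exact ⟨hA, e, fun i => (he i).symm⟩

theorem hasSpectrum_conjStarAlgAut_diagonal (U : unitary (Matrix (Fin n) (Fin n) ℂ))
    (f : Fin n → ℝ) : HasSpectrum (conjStarAlgAut ℂ _ U (diagonal (RCLike.ofReal ∘ f))) f := by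
  refine IsHermitian.hasSpectrum_of_charpoly_eq ?_ ?_
  · refine IsSelfAdjoint.map ?_ _
    exact isHermitian_diagonal_of_self_adjoint _ (by ext; simp)
  · rw [conjStarAlgAut_apply, charpoly_mul_comm, ← mul_assoc]
    simp [charpoly_diagonal]

theorem HasSpectrum.inv {μ : ι → ℝ} (h : HasSpectrum A μ) (hμ : ∀ i, μ i ≠ 0) :
    HasSpectrum A⁻¹ fun i => (μ i)⁻¹ := by
  obtain ⟨hA, e, he⟩ := h
  have hinv : A⁻¹ = conjStarAlgAut ℂ _ hA.eigenvectorUnitary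
      (diagonal (RCLike.ofReal ∘ fun i => (hA.eigenvalues i)⁻¹)) := by
    refine inv_eq_left_inv ?_
    conv_lhs => rhs; rw [hA.spectral_theorem]
    rw [← map_mul, diagonal_mul_diagonal, ← map_one (conjStarAlgAut ℂ _ hA.eigenvectorUnitary),
      ← diagonal_one]
    congr 2
    ext i
    simp [he, hμ]
  rw [← hasSpectrum_comp_equiv_iff e, hinv]
  convert hasSpectrum_conjStarAlgAut_diagonal _ _ using 1
  ext i
  simp [he]

theorem HasSpectrum.exists_hasSpectrum_ge {α μ : ι → ℝ} (h : HasSpectrum A α)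
    (hle : ∀ i, α i ≤ μ i) : ∃ M, HasSpectrum M μ ∧ A ≤ M := by
  obtain ⟨hA, e, he⟩ := h
  set U := hA.eigenvectorUnitary
  refine ⟨conjStarAlgAut ℂ _ U (diagonal (RCLike.ofReal ∘ μ ∘ e)),
    (hasSpectrum_comp_equiv_iff e).mp (hasSpectrum_conjStarAlgAut_diagonal U _), ?_⟩
  rw [← sub_nonneg]
  conv_rhs => arg 2; rw [hA.spectral_theorem]
  rw [← map_sub, diagonal_sub, conjStarAlgAut_apply]
  refine star_right_conjugate_nonneg ?_ _
  rw [nonneg_iff_posSemidef, posSemidef_diagonal_iff]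
  intro i
  simpa [he] using hle (e i)

theorem HasSpectrum.exists_orthonormalBasis {μ : ι → ℝ} (h : HasSpectrum A μ) :
    ∃ b : OrthonormalBasis ι ℂ (EuclideanSpace ℂ (Fin n)),
      ∀ i, toEuclideanLin A (b i) = (μ i : ℂ) • b i := by
  obtain ⟨hA, e, he⟩ := h
  refine ⟨hA.eigenvectorBasis.reindex e, fun i => ?_⟩
  ext1
  simp [hA.mulVec_eigenvectorBasis, he]

theorem HasSpectrum.le_of_le {B : Matrix (Fin n) (Fin n) ℂ} {α β : Fin n → ℝ}
    (hA : HasSpectrum A α) (hB : HasSpectrum B β) (hα : Antitone α) (hβ : Antitone β)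
    (hBA : B ≤ A) (j : Fin n) : β j ≤ α j := by
  obtain ⟨b, hb⟩ := hB.exists_orthonormalBasis
  obtain ⟨b', hb'⟩ := hA.exists_orthonormalBasis
  refine b.eigenvalues_le_of_re_inner_le b' hβ hα hb hb' (fun v => ?_) j
  have := (isPositive_toEuclideanLin_iff.mpr (le_iff.mp hBA)).2 v
  simpa [inner_sub_left] using this

end Spectrum

theorem spectral_picture_of_duals_large_n_general
    (d m : ℕ) (k : Fin m → ℕ)
    (V : ∀ i : Fin m, Matrix (Fin (k i)) (Fin d) ℂ)
    (S : Matrix (Fin d) (Fin d) ℂ) (hS : S = ∑ i, (V i)ᴴ * V i)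
    (hSpd : S.PosDef)
    (hn : 2 * d ≤ ∑ i, k i)
    (lam : Fin d → ℝ) (hlamdec : Antitone lam) (hlam : HasSpectrum S lam)
    (μ : Fin d → ℝ) (hμdec : Antitone μ) :
    (∃ W : ∀ i : Fin m, Matrix (Fin (k i)) (Fin d) ℂ,
        (∑ i, (W i)ᴴ * V i = 1) ∧ HasSpectrum (∑ i, (W i)ᴴ * W i) μ)
    ↔ ∀ j : Fin d, (lam j.rev)⁻¹ ≤ μ j := by
  set Vs : Matrix (Σ i, Fin (k i)) (Fin d) ℂ := of (Sigma.uncurry V)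
  have hSV : Vsᴴ * Vs = S := hS ▸ conjTranspose_of_uncurry_mul_of_uncurry V V
  have hunit : IsUnit (Vsᴴ * Vs).det := hSV ▸ hSpd.det_pos.ne'.isUnit
  have hlam_pos := hlam.pos_of_posDef hSpd
  have hinv : HasSpectrum S⁻¹ fun j : Fin d => (lam j.rev)⁻¹ :=
    (hasSpectrum_comp_equiv_iff Fin.revPerm).mpr (hlam.inv fun i => (hlam_pos i).ne')
  have hinv_anti : Antitone fun j : Fin d => (lam j.rev)⁻¹ := fun a b hab =>
    inv_anti₀ (hlam_pos _) (hlamdec (Fin.rev_le_rev.mpr hab))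
  constructor
  · rintro ⟨W, hdual, hspec⟩
    rw [← conjTranspose_of_uncurry_mul_of_uncurry] at hdual hspec
    have hle := inv_le_conjTranspose_mul_self_of_conjTranspose_mul_eq_one hunit hdual
    exact hspec.le_of_le hinv hμdec hinv_anti (hSV ▸ hle)
  · intro h
    obtain ⟨M, hM, hle⟩ := hinv.exists_hasSpectrum_ge h
    obtain ⟨Z, hdual, rfl⟩ := exists_conjTranspose_mul_eq_one_and_conjTranspose_mul_self_eq
      (by simpa using hn) hunit (hSV ▸ hle)
    refine ⟨fun i => of fun a => Z ⟨i, a⟩, ?_, ?_⟩ <;>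
      rwa [← conjTranspose_of_uncurry_mul_of_uncurry]

/-- Let `V` be a reconstruction system on `ℂ^d` with `n = ∑ kᵢ ≥ 2d`,
and let `λ₁ ≥ ⋯ ≥ λ_d` be the eigenvalues of `S_V`. A strictly positive decreasing
vector `μ` is the spectrum of `S_W` for some dual system `W` of `V` iff
`μ_j ≥ λ_{d-j+1}(S_V)⁻¹` for all `j`. -/
theorem spectral_picture_of_duals_large_n
    (d m : ℕ) (k : Fin m → ℕ)
    (V : ∀ i : Fin m, Matrix (Fin (k i)) (Fin d) ℂ)
    (S : Matrix (Fin d) (Fin d) ℂ) (hS : S = ∑ i, (V i)ᴴ * V i)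
    (hSpd : S.PosDef)
    (hn : 2 * d ≤ ∑ i, k i)
    (lam : Fin d → ℝ) (hlamdec : Antitone lam) (hlam : HasSpectrum S lam)
    (μ : Fin d → ℝ) (hμpos : ∀ i, 0 < μ i) (hμdec : Antitone μ) :
    (∃ W : ∀ i : Fin m, Matrix (Fin (k i)) (Fin d) ℂ,
        (∑ i, (W i)ᴴ * V i = 1) ∧ HasSpectrum (∑ i, (W i)ᴴ * W i) μ)
    ↔ ∀ j : Fin d, (lam j.rev)⁻¹ ≤ μ j :=
  spectral_picture_of_duals_large_n_general d m k V S hS hSpd hn lam hlamdec hlam μ hμdec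
end

section
/- Let α, γ ∈ ℝ^n, β ∈ ℝ^m, and b ∈ ℝ with b ≤ min_k γ_k. If Σ(γ, b·1_m) ≤ Σ(α, β) and γ is weakly submajorized by α (γ ≺_w α), then the concatenated vector (γ, b·1_m) ∈ ℝ^{n+m} is weakly submajorized by (α, β): (γ, b·1_m) ≺_w (α, β). -/
open Finset

/-- The decreasing rearrangement of a finite real vector. -/
noncomputable def decRearrange {N : ℕ} (x : Fin N → ℝ) : Fin N → ℝ :=
  fun i => x (Tuple.sort x i.rev)

/-- Weak (sub)majorization `x ≺_w y`: every partial sum of the decreasing rearrangement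
of `x` is dominated by the corresponding one of `y`. -/
def SubMajorizes {N : ℕ} (x y : Fin N → ℝ) : Prop :=
  ∀ K : ℕ, ∑ i ∈ univ.filter (fun i : Fin N => (i : ℕ) < K), decRearrange x i
      ≤ ∑ i ∈ univ.filter (fun i : Fin N => (i : ℕ) < K), decRearrange y i

/-!
Weak majorization can be tested on index sets: `x ≺_w y` iff every sum of `x` over a set `s` is
dominated by a sum of `y` over a set of the same size. Take `s` of size `K` in `(γ, b·1_m)`.
If `K ≤ n`, its `b`-entries can be traded for unused entries of `γ`, each `≥ b`, which reduces
to `γ ≺_w α`. If `K = n + j > n`, the sum is at most `Σγ + j b`, and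
`Σγ - Σα ≤ (sum of the j largest entries of β) - j b` because the right side is concave in `j`
and the inequality holds at `j = 0` (as `γ ≺_w α`) and at `j = m` (the hypothesis on total sums).
-/

theorem Finset.sum_le_sum_of_forall_le_of_card_eq {ι M : Type*} [AddCommMonoid M]
    [LinearOrder M] [IsOrderedAddMonoid M] {s t : Finset ι} {f : ι → M} (hst : #s = #t)
    (hf : ∀ i ∈ s, ∀ j ∈ t, f i ≤ f j) : ∑ i ∈ s, f i ≤ ∑ j ∈ t, f j := by
  rcases s.eq_empty_or_nonempty with rfl | hs
  · rw [card_empty, eq_comm, card_eq_zero] at hst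
    simp [hst]
  · calc ∑ i ∈ s, f i ≤ #s • s.sup' hs f := sum_le_card_nsmul _ _ _ fun i hi => le_sup' f hi
      _ = #t • s.sup' hs f := by rw [hst]
      _ ≤ ∑ j ∈ t, f j :=
        card_nsmul_le_sum _ _ _ fun j hj => sup'_le _ _ fun i hi => hf i hi j hj

namespace Fin

variable {N : ℕ}

theorem sum_le_sum_filter_lt_card_of_antitone {d : Fin N → ℝ} (hd : Antitone d)
    (s : Finset (Fin N)) :
    ∑ i ∈ s, d i ≤ ∑ i ∈ univ.filter (fun i : Fin N => (i : ℕ) < #s), d i := by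
  set t := univ.filter (fun i : Fin N => (i : ℕ) < #s)
  have hcard : #s = #t := by
    rw [Fin.card_filter_val_lt, min_eq_right (card_le_univ s |>.trans_eq (Fintype.card_fin N))]
  rw [← sum_inter_add_sum_sdiff s t, ← sum_inter_add_sum_sdiff t s, inter_comm]
  refine add_le_add_right (sum_le_sum_of_forall_le_of_card_eq (card_sdiff_comm hcard) ?_) _
  intro i hi j hj
  simp only [t, mem_sdiff, mem_filter, mem_univ, true_and] at hi hj
  exact hd (Fin.le_def.2 (by omega))

theorem min_zero_sum_le_sum_filter_lt_of_antitone {d : Fin N → ℝ} (hd : Antitone d) (j : ℕ) :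
    min 0 (∑ i, d i) ≤ ∑ i ∈ univ.filter (fun i : Fin N => (i : ℕ) < j), d i := by
  rw [← sum_filter_add_sum_filter_not univ (fun i : Fin N => (i : ℕ) < j)]
  by_cases htail : ∀ k ∈ univ.filter (fun i : Fin N => ¬ (i : ℕ) < j), d k ≤ 0
  · exact min_le_of_right_le (add_le_of_nonpos_right (sum_nonpos htail))
  · push Not at htail
    obtain ⟨k, hk, hdk⟩ := htail
    refine min_le_of_left_le (sum_nonneg fun i hi => hdk.le.trans (hd ?_))
    simp only [mem_filter, mem_univ, true_and] at hi hk
    exact Fin.le_def.2 (by omega)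

end Fin

section TopSum

variable {N : ℕ}

noncomputable def sortPerm (x : Fin N → ℝ) : Equiv.Perm (Fin N) :=
  Fin.revPerm.trans (Tuple.sort x)

theorem decRearrange_apply (x : Fin N → ℝ) (i : Fin N) : decRearrange x i = x (sortPerm x i) := rfl

theorem antitone_decRearrange (x : Fin N → ℝ) : Antitone (decRearrange x) :=
  fun _ _ hij => Tuple.monotone_sort x (Fin.rev_le_rev.2 hij)

noncomputable def topSum (x : Fin N → ℝ) (K : ℕ) : ℝ :=
  ∑ i ∈ univ.filter (fun i : Fin N => (i : ℕ) < K), decRearrange x i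

theorem subMajorizes_iff_topSum_le {x y : Fin N → ℝ} :
    SubMajorizes x y ↔ ∀ K, topSum x K ≤ topSum y K := Iff.rfl

theorem topSum_min (x : Fin N → ℝ) (K : ℕ) : topSum x (min N K) = topSum x K := by
  unfold topSum
  congr 1
  ext i
  simp

theorem exists_card_eq_topSum (x : Fin N → ℝ) (K : ℕ) :
    ∃ t : Finset (Fin N), #t = min N K ∧ topSum x K = ∑ i ∈ t, x i :=
  ⟨(univ.filter fun i : Fin N => (i : ℕ) < K).map (sortPerm x).toEmbedding,
    by rw [card_map, Fin.card_filter_val_lt], by simp [topSum, decRearrange_apply]⟩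

theorem sum_le_topSum (x : Fin N → ℝ) (s : Finset (Fin N)) : ∑ i ∈ s, x i ≤ topSum x #s := by
  have hs : ∑ i ∈ s, x i = ∑ i ∈ s.map (sortPerm x).symm.toEmbedding, decRearrange x i := by
    simp [decRearrange_apply]
  rw [hs, topSum, ← card_map (sortPerm x).symm.toEmbedding]
  exact Fin.sum_le_sum_filter_lt_card_of_antitone (antitone_decRearrange x) _

theorem subMajorizes_iff_forall_exists_card_eq {x y : Fin N → ℝ} :
    SubMajorizes x y ↔ ∀ s : Finset (Fin N), ∃ t : Finset (Fin N), #t = #s ∧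
      ∑ i ∈ s, x i ≤ ∑ i ∈ t, y i := by
  rw [subMajorizes_iff_topSum_le]
  constructor
  · intro h s
    obtain ⟨t, ht, hy⟩ := exists_card_eq_topSum y #s
    refine ⟨t, ht.trans (min_eq_right (card_le_univ s |>.trans_eq (Fintype.card_fin N))), ?_⟩
    exact (sum_le_topSum x s).trans ((h _).trans_eq hy)
  · intro h K
    obtain ⟨s, hs, hx⟩ := exists_card_eq_topSum x K
    obtain ⟨t, ht, hst⟩ := h s
    calc topSum x K = ∑ i ∈ s, x i := hx
      _ ≤ ∑ i ∈ t, y i := hst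
      _ ≤ topSum y K := by
        rw [← topSum_min, ← hs, ← ht]
        exact sum_le_topSum y t

theorem min_zero_sum_sub_le_topSum_sub (x : Fin N → ℝ) (b : ℝ) {K : ℕ} (hK : K ≤ N) :
    min 0 (∑ i, x i - N * b) ≤ topSum x K - K * b := by
  have hsum : ∑ i, (decRearrange x i - b) = ∑ i, x i - N * b := by
    simp [sum_sub_distrib, decRearrange_apply, Equiv.sum_comp]
  have htop : ∑ i ∈ univ.filter (fun i : Fin N => (i : ℕ) < K), (decRearrange x i - b)
      = topSum x K - K * b := by
    simp [sum_sub_distrib, topSum, Fin.card_filter_val_lt, min_eq_right hK]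
  rw [← hsum, ← htop]
  exact Fin.min_zero_sum_le_sum_filter_lt_of_antitone
    (fun i j hij => sub_le_sub_right (antitone_decRearrange x hij) b) K

end TopSum

section Append

variable {n m : ℕ}

def appendFinset (s : Finset (Fin n)) (t : Finset (Fin m)) : Finset (Fin (n + m)) :=
  (s.disjSum t).map finSumFinEquiv.toEmbedding

theorem card_appendFinset (s : Finset (Fin n)) (t : Finset (Fin m)) :
    #(appendFinset s t) = #s + #t := by
  simp [appendFinset]

theorem sum_appendFinset (s : Finset (Fin n)) (t : Finset (Fin m)) (f : Fin n → ℝ)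
    (g : Fin m → ℝ) :
    ∑ i ∈ appendFinset s t, Fin.append f g i = ∑ i ∈ s, f i + ∑ i ∈ t, g i := by
  simp [appendFinset]

theorem exists_eq_appendFinset (S : Finset (Fin (n + m))) :
    ∃ s t, S = appendFinset s t := by
  refine ⟨(S.map finSumFinEquiv.symm.toEmbedding).toLeft,
    (S.map finSumFinEquiv.symm.toEmbedding).toRight, ?_⟩
  rw [appendFinset, toLeft_disjSum_toRight, map_map]
  simp

end Append

theorem sum_add_card_sdiff_mul_le {ι : Type*} [DecidableEq ι] {s u : Finset ι} (hsu : s ⊆ u)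
    {f : ι → ℝ} {b : ℝ} (hb : ∀ i ∈ u, b ≤ f i) :
    ∑ i ∈ s, f i + #(u \ s) * b ≤ ∑ i ∈ u, f i := by
  rw [← sum_sdiff hsu, add_comm, ← nsmul_eq_mul]
  exact add_le_add (card_nsmul_le_sum _ _ _ fun i hi => hb i (mem_sdiff.1 hi).1) le_rfl

namespace SubMajorizes

variable {n : ℕ} {γ α : Fin n → ℝ}

theorem sum_le (hw : SubMajorizes γ α) : ∑ i, γ i ≤ ∑ i, α i := by
  obtain ⟨t, ht, hle⟩ := subMajorizes_iff_forall_exists_card_eq.1 hw univ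
  rwa [(card_eq_iff_eq_univ t).1 (by simpa using ht)] at hle

theorem exists_card_eq_sum_add_mul_le (hw : SubMajorizes γ α) {b : ℝ} (hb : ∀ i, b ≤ γ i)
    {s : Finset (Fin n)} {k : ℕ} (hk : #s + k ≤ n) :
    ∃ t : Finset (Fin n), #t = #s + k ∧ ∑ i ∈ s, γ i + k * b ≤ ∑ i ∈ t, α i := by
  obtain ⟨u, hsu, -, hu⟩ :=
    exists_subsuperset_card_eq (n := #s + k) (subset_univ s) (by omega) (by simpa using hk)
  obtain ⟨t, ht, hut⟩ := subMajorizes_iff_forall_exists_card_eq.1 hw u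
  have hk : #(u \ s) = k := by rw [card_sdiff_of_subset hsu]; omega
  exact ⟨t, ht.trans hu, (hk ▸ sum_add_card_sdiff_mul_le hsu fun i _ => hb i).trans hut⟩

end SubMajorizes

/-- **majorization lemma.** Let `α, γ ∈ ℝ^n`, `β ∈ ℝ^m`, `b ∈ ℝ` with
`b ≤ min γ`. If `∑(γ, b·𝟙_m) ≤ ∑(α, β)` and `γ ≺_w α`, then
`(γ, b·𝟙_m) ≺_w (α, β)`. -/
theorem append_submajorizes
    (n m : ℕ) (α γ : Fin n → ℝ) (β : Fin m → ℝ) (b : ℝ)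
    (hb : ∀ i, b ≤ γ i)
    (hsum : ∑ i, Fin.append γ (fun _ : Fin m => b) i ≤ ∑ i, Fin.append α β i)
    (hw : SubMajorizes γ α) :
    SubMajorizes (Fin.append γ (fun _ : Fin m => b)) (Fin.append α β) := by
  have hsum' : ∑ i, γ i + m * b ≤ ∑ i, α i + ∑ i, β i := by simpa [Fin.sum_univ_add] using hsum
  rw [subMajorizes_iff_forall_exists_card_eq]
  intro S
  obtain ⟨s, r, rfl⟩ := exists_eq_appendFinset S
  rw [card_appendFinset, sum_appendFinset, sum_const, nsmul_eq_mul]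
  by_cases hsr : #s + #r ≤ n
  · obtain ⟨t, ht, hle⟩ := hw.exists_card_eq_sum_add_mul_le hb hsr
    exact ⟨appendFinset t ∅, by simp [card_appendFinset, ht], by simpa [sum_appendFinset] using hle⟩
  · obtain ⟨j, hj⟩ := Nat.exists_eq_add_of_le (le_of_not_ge hsr)
    have hs : #s ≤ n := by simpa using card_le_univ s
    have hrm : #r ≤ m := by simpa using card_le_univ r
    have hjm : j ≤ m := by omega
    have hr : #r = #(univ \ s) + j := by
      rw [card_sdiff_of_subset (subset_univ s), card_univ, Fintype.card_fin]; omega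
    obtain ⟨t, ht, hβ⟩ := exists_card_eq_topSum β j
    refine ⟨appendFinset univ t, by simp [card_appendFinset, ht, hjm, hj], ?_⟩
    have hfill := sum_add_card_sdiff_mul_le (subset_univ s) fun i _ => hb i
    have hconcave := (le_min (sub_nonpos.2 hw.sum_le) (by linarith : _ ≤ ∑ i, β i - m * b)).trans
      (min_zero_sum_sub_le_topSum_sub β b hjm)
    rw [sum_appendFinset, ← hβ, hr]
    push_cast
    linarith
end
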